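/- Let 0 < γ ≤ 1/2 and let (a_n)_{n≥1} be the block-constructed sequence built from strictly increasing sequences (m_j), (e_j) of positive integers satisfying condition (i): (log m_l)² ≥ E_{l−1} for all l ≥ 2. Let α be a real number such that the discrepancy of ({n α})_{n≥1} satisfies N·D_N ≤ c̄₁(α)·(log N)^{3/2} for all N ≥ 2. Then for all sufficiently large l, the discrepancy of the first F_l terms of ({a_n α})_{n≥1} satisfies F_l · D_{F_l} ≤ 2·(log F_l)². -/

import Mathlib

open Finset MeasureTheory Filter

/-- Discrepancy of the first `N` points `x 1, …, x N` (points in `[0,1)`):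
`D_N = sup_{0 ≤ a < b ≤ 1} | #{1 ≤ n ≤ N : x n ∈ [a,b)} / N − (b − a) |`. -/
noncomputable def disc (N : ℕ) (x : ℕ → ℝ) : ℝ :=
  ⨆ p : {p : ℝ × ℝ // 0 ≤ p.1 ∧ p.1 < p.2 ∧ p.2 ≤ 1},
    |(((Finset.Icc 1 N).filter (fun n => x n ∈ Set.Ico p.1.1 p.1.2)).card : ℝ) / N
      - (p.1.2 - p.1.1)|

/-- Index of the last term of the `s`-th linear block:
`F_s = Σ_{i=1}^s m_i + Σ_{i=1}^{s-1} e_i`. -/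
def Fidx (m e : ℕ → ℕ) (s : ℕ) : ℕ :=
  (∑ i ∈ Finset.Icc 1 s, m i) + ∑ i ∈ Finset.Icc 1 (s - 1), e i

/-- Index of the last term of the `s`-th quadratic block:
`E_s = Σ_{i=1}^s m_i + Σ_{i=1}^s e_i`. -/
def Eidx (m e : ℕ → ℕ) (s : ℕ) : ℕ :=
  (∑ i ∈ Finset.Icc 1 s, m i) + ∑ i ∈ Finset.Icc 1 s, e i

/-- The value `A_j = B_{j-1} + m_j` of the block construction. -/
def Aval (m e : ℕ → ℕ) (j : ℕ) : ℕ :=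
  (∑ i ∈ Finset.Icc 1 j, m i) + ∑ i ∈ Finset.Icc 1 (j - 1), (e i) ^ 2

/-- The value `B_j = A_j + e_j ^ 2` of the block construction. -/
def Bval (m e : ℕ → ℕ) (j : ℕ) : ℕ :=
  (∑ i ∈ Finset.Icc 1 j, m i) + ∑ i ∈ Finset.Icc 1 j, (e i) ^ 2

/-- `a` is the block-constructed sequence built from `m` and `e`: for each `l ≥ 1`,
the terms with indices `E_{l-1} < n ≤ F_l` form the `l`-th linear block
`B_{l-1}+1, …, B_{l-1}+m_l = A_l`, and the terms with indices `F_l < n ≤ E_l`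
form the `l`-th quadratic block `A_l+1², …, A_l+e_l² = B_l`. -/
def IsBlockSeq (m e a : ℕ → ℕ) : Prop :=
  ∀ l : ℕ, 1 ≤ l →
    (∀ n : ℕ, Eidx m e (l - 1) < n → n ≤ Fidx m e l →
      a n = Bval m e (l - 1) + (n - Eidx m e (l - 1))) ∧
    (∀ n : ℕ, Fidx m e l < n → n ≤ Eidx m e l →
      a n = Aval m e l + (n - Fidx m e l) ^ 2)

/-! The first `F_{l+1} = E_l + m_{l+1}` terms of `(a_n)` are `E_l` arbitrary terms followed by the
consecutive integers `B_l + 1, …, A_{l+1}`. Hence for every interval the local discrepancy of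
`({a_n α})` at `F_{l+1}` is at most `E_l` plus the local discrepancies of `({n α})` at `A_{l+1}` and
`B_l`. Condition (i) gives `E_l ≤ (log m_{l+1})² ≤ (log F_{l+1})²`, and `A_{l+1} ≤ F_{l+1}³` turns the
two other terms into `O((log F_{l+1})^{3/2})`, which is eventually below `(log F_{l+1})²`. -/

-- `A_N([u, v))` in the notation of the discrepancy.
noncomputable def countIco (x : ℕ → ℝ) (N : ℕ) (u v : ℝ) : ℕ := #{n ∈ Icc 1 N | x n ∈ Set.Ico u v}

lemma card_filter_Icc_one_add (p : ℕ → Prop) [DecidablePred p] (B M : ℕ) :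
    #{n ∈ Icc 1 (B + M) | p n} = #{n ∈ Icc 1 B | p n} + #{j ∈ Icc 1 M | p (B + j)} := by
  have hsplit : Icc 1 (B + M) = Icc 1 B ∪ (Icc 1 M).map (addLeftEmbedding B) := by
    rw [map_add_left_Icc]; ext n; simp only [mem_union, mem_Icc]; omega
  have hdisj : Disjoint (Icc 1 B) ((Icc 1 M).map (addLeftEmbedding B)) := by
    rw [map_add_left_Icc, disjoint_left]; intro n; simp only [mem_Icc]; omega
  rw [hsplit, filter_union, card_union_of_disjoint (disjoint_filter_filter hdisj), filter_map,
    card_map]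
  rfl

lemma countIco_le (x : ℕ → ℝ) (N : ℕ) (u v : ℝ) : countIco x N u v ≤ N :=
  (card_filter_le _ _).trans (Nat.card_Icc 1 N).le

lemma abs_countIco_div_sub_le_one (x : ℕ → ℝ) (N : ℕ) {u v : ℝ} (hu : 0 ≤ u) (huv : u < v)
    (hv : v ≤ 1) : |(countIco x N u v : ℝ) / N - (v - u)| ≤ 1 := by
  have h1 : (countIco x N u v : ℝ) / N ≤ 1 :=
    div_le_one_of_le₀ (by exact_mod_cast countIco_le x N u v) N.cast_nonneg
  have h0 : 0 ≤ (countIco x N u v : ℝ) / N := by positivity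
  rw [abs_sub_le_iff]; constructor <;> linarith

lemma abs_countIco_sub_le (x : ℕ → ℝ) (N : ℕ) {u v : ℝ} (hu : 0 ≤ u) (huv : u < v)
    (hv : v ≤ 1) : |(countIco x N u v : ℝ) - N * (v - u)| ≤ N := by
  have hc : (countIco x N u v : ℝ) ≤ N := by exact_mod_cast countIco_le x N u v
  have hN : (N : ℝ) * (v - u) ≤ N := mul_le_of_le_one_right N.cast_nonneg (by linarith)
  have hN0 : 0 ≤ (N : ℝ) * (v - u) := mul_nonneg N.cast_nonneg (by linarith)
  rw [abs_sub_le_iff]; constructor <;> linarith [(countIco x N u v).cast_nonneg (α := ℝ)]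

lemma natCast_mul_disc_le_iff {x : ℕ → ℝ} {N : ℕ} (hN : 0 < N) {b : ℝ} :
    N * disc N x ≤ b ↔
      ∀ u v : ℝ, 0 ≤ u → u < v → v ≤ 1 → |(countIco x N u v : ℝ) - N * (v - u)| ≤ b := by
  have hN' : (0 : ℝ) < N := by exact_mod_cast hN
  have : Nonempty {p : ℝ × ℝ // 0 ≤ p.1 ∧ p.1 < p.2 ∧ p.2 ≤ 1} := ⟨⟨(0, 1), by norm_num⟩⟩
  have hterm : ∀ u v : ℝ, |(countIco x N u v : ℝ) / N - (v - u)|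
      = |(countIco x N u v : ℝ) - N * (v - u)| / N := by
    intro u v
    rw [← abs_of_pos hN', ← abs_div, abs_of_pos hN', sub_div, mul_div_cancel_left₀ _ hN'.ne']
  rw [← le_div_iff₀' hN', disc, ciSup_le_iff]
  · simp only [Subtype.forall, Prod.forall, and_imp]
    refine forall₄_congr fun u v _ _ => forall_congr' fun _ => ?_
    rw [← countIco, hterm, div_le_div_iff_of_pos_right hN']
  · refine ⟨1, ?_⟩
    rintro _ ⟨⟨⟨u, v⟩, hu, huv, hv⟩, rfl⟩
    exact abs_countIco_div_sub_le_one x N hu huv hv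

section BlockSequence

variable {m e a : ℕ → ℕ}

lemma Fidx_succ (m e : ℕ → ℕ) (l : ℕ) : Fidx m e (l + 1) = Eidx m e l + m (l + 1) := by
  rw [Fidx, Eidx, sum_Icc_succ_top (by omega), Nat.add_sub_cancel]; ring

lemma Aval_succ (m e : ℕ → ℕ) (l : ℕ) : Aval m e (l + 1) = Bval m e l + m (l + 1) := by
  rw [Aval, Bval, sum_Icc_succ_top (by omega), Nat.add_sub_cancel]; ring

lemma apply_le_Fidx (m e : ℕ → ℕ) {l : ℕ} (hl : 1 ≤ l) : m l ≤ Fidx m e l :=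
  (single_le_sum (fun _ _ => Nat.zero_le _) (mem_Icc.2 ⟨hl, le_rfl⟩)).trans (Nat.le_add_right _ _)

lemma apply_le_Bval (m e : ℕ → ℕ) {l : ℕ} (hl : 1 ≤ l) : m l ≤ Bval m e l :=
  (single_le_sum (fun _ _ => Nat.zero_le _) (mem_Icc.2 ⟨hl, le_rfl⟩)).trans (Nat.le_add_right _ _)

lemma Aval_le_Fidx_pow_three (m e : ℕ → ℕ) {l : ℕ} (hl : 2 ≤ Fidx m e l) :
    Aval m e l ≤ Fidx m e l ^ 3 := by
  have hsq : ∑ i ∈ Icc 1 (l - 1), e i ^ 2 ≤ Fidx m e l ^ 2 :=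
    (sum_sq_le_sq_sum_of_nonneg fun _ _ => Nat.zero_le _).trans
      (Nat.pow_le_pow_left (Nat.le_add_left _ _) 2)
  calc Aval m e l ≤ Fidx m e l + Fidx m e l ^ 2 := add_le_add (Nat.le_add_right _ _) hsq
    _ ≤ Fidx m e l ^ 3 := by nlinarith

lemma add_le_apply_add_one_of_strictMonoOn (hm : StrictMonoOn m (Set.Ici 1)) (k : ℕ) :
    m 1 + k ≤ m (k + 1) := by
  induction k with
  | zero => rfl
  | succ k ih =>
    have := hm (Set.mem_Ici.2 (Nat.le_add_left 1 k)) (Set.mem_Ici.2 (Nat.le_add_left 1 (k + 1)))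
      (Nat.lt_succ_self (k + 1))
    omega

lemma le_Fidx_succ (e : ℕ → ℕ) (hm : StrictMonoOn m (Set.Ici 1)) (k : ℕ) :
    k ≤ Fidx m e (k + 1) :=
  (Nat.le_add_left _ _).trans ((add_le_apply_add_one_of_strictMonoOn hm k).trans
    (apply_le_Fidx m e (Nat.le_add_left 1 k)))

lemma le_Bval_succ (e : ℕ → ℕ) (hm : StrictMonoOn m (Set.Ici 1)) (k : ℕ) :
    k ≤ Bval m e (k + 1) :=
  (Nat.le_add_left _ _).trans ((add_le_apply_add_one_of_strictMonoOn hm k).trans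
    (apply_le_Bval m e (Nat.le_add_left 1 k)))

lemma tendsto_Fidx_atTop (e : ℕ → ℕ) (hm : StrictMonoOn m (Set.Ici 1)) :
    Tendsto (Fidx m e) atTop atTop := by
  refine tendsto_atTop_mono' atTop ?_ (tendsto_sub_atTop_nat 1)
  filter_upwards [eventually_ge_atTop 1] with l hl
  obtain ⟨k, rfl⟩ : ∃ k, l = k + 1 := ⟨l - 1, by omega⟩
  simpa using le_Fidx_succ e hm k

lemma IsBlockSeq.apply_Eidx_add (ha : IsBlockSeq m e a) {l j : ℕ} (hj : 1 ≤ j)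
    (hjm : j ≤ m (l + 1)) : a (Eidx m e l + j) = Bval m e l + j := by
  have h := (ha (l + 1) (Nat.le_add_left 1 l)).1 (Eidx m e l + j)
    (by simp only [Nat.add_sub_cancel]; omega) (by rw [Fidx_succ]; omega)
  simpa only [Nat.add_sub_cancel, Nat.add_sub_cancel_left] using h

lemma IsBlockSeq.countIco_Fidx_succ (ha : IsBlockSeq m e a) (x : ℕ → ℝ) (l : ℕ) (u v : ℝ) :
    countIco (x ∘ a) (Fidx m e (l + 1)) u v + countIco x (Bval m e l) u v
      = countIco (x ∘ a) (Eidx m e l) u v + countIco x (Aval m e (l + 1)) u v := by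
  have hblock : #{j ∈ Icc 1 (m (l + 1)) | (x ∘ a) (Eidx m e l + j) ∈ Set.Ico u v}
      = #{j ∈ Icc 1 (m (l + 1)) | x (Bval m e l + j) ∈ Set.Ico u v} := by
    refine congrArg card (filter_congr fun j hj => ?_)
    rw [mem_Icc] at hj
    rw [Function.comp_apply, ha.apply_Eidx_add hj.1 hj.2]
  simp only [countIco, Fidx_succ, Aval_succ, card_filter_Icc_one_add, hblock]
  ring

lemma IsBlockSeq.mul_disc_Fidx_succ_le (ha : IsBlockSeq m e a) (x : ℕ → ℝ) {l : ℕ} {b : ℝ}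
    (hm : 0 < m (l + 1)) (hB : 0 < Bval m e l)
    (hxB : Bval m e l * disc (Bval m e l) x ≤ b)
    (hxA : Aval m e (l + 1) * disc (Aval m e (l + 1)) x ≤ b) :
    Fidx m e (l + 1) * disc (Fidx m e (l + 1)) (x ∘ a) ≤ Eidx m e l + 2 * b := by
  rw [natCast_mul_disc_le_iff (by rw [Fidx_succ]; omega)]
  rw [natCast_mul_disc_le_iff hB] at hxB
  rw [natCast_mul_disc_le_iff (by rw [Aval_succ]; omega)] at hxA
  intro u v hu huv hv
  have hcount := congrArg (Nat.cast : ℕ → ℝ) (ha.countIco_Fidx_succ x l u v)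
  have hF := congrArg (Nat.cast : ℕ → ℝ) (Fidx_succ m e l)
  have hA := congrArg (Nat.cast : ℕ → ℝ) (Aval_succ m e l)
  push_cast at hcount hF hA
  have hsplit : (countIco (x ∘ a) (Fidx m e (l + 1)) u v : ℝ) - Fidx m e (l + 1) * (v - u)
      = ((countIco (x ∘ a) (Eidx m e l) u v : ℝ) - Eidx m e l * (v - u))
        + ((countIco x (Aval m e (l + 1)) u v : ℝ) - Aval m e (l + 1) * (v - u))
        - ((countIco x (Bval m e l) u v : ℝ) - Bval m e l * (v - u)) := by
    linear_combination hcount - (v - u) * hF + (v - u) * hA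
  have hE := abs_countIco_sub_le (x ∘ a) (Eidx m e l) hu huv hv
  have hxB := hxB u v hu huv hv
  have hxA := hxA u v hu huv hv
  rw [hsplit]
  rw [abs_le] at hE hxB hxA ⊢
  constructor <;> linarith

end BlockSequence

lemma mul_disc_le_of_le_pow_three {x : ℕ → ℝ} {c : ℝ}
    (hx : ∀ N : ℕ, 2 ≤ N → (N : ℝ) * disc N x ≤ c * Real.log N ^ (3 / 2 : ℝ))
    {N F : ℕ} (hN : 2 ≤ N) (hNF : N ≤ F ^ 3) :
    (N : ℝ) * disc N x ≤ |c| * (3 * Real.log F) ^ (3 / 2 : ℝ) := by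
  have hN0 : (1 : ℝ) ≤ N := by exact_mod_cast (by omega : 1 ≤ N)
  have hlog : Real.log N ≤ 3 * Real.log F :=
    calc Real.log N ≤ Real.log ((F : ℝ) ^ 3) :=
          Real.log_le_log (by positivity) (by exact_mod_cast hNF)
      _ = 3 * Real.log F := by rw [Real.log_pow]; norm_num
  have hlog0 : 0 ≤ Real.log N := Real.log_nonneg hN0
  calc (N : ℝ) * disc N x ≤ c * Real.log N ^ (3 / 2 : ℝ) := hx N hN
    _ ≤ |c| * Real.log N ^ (3 / 2 : ℝ) := by gcongr; exact le_abs_self c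
    _ ≤ |c| * (3 * Real.log F) ^ (3 / 2 : ℝ) := by gcongr

lemma eventually_mul_rpow_three_halves_le_sq (C : ℝ) :
    ∀ᶠ t : ℝ in atTop, C * t ^ (3 / 2 : ℝ) ≤ t ^ 2 := by
  filter_upwards [(tendsto_rpow_atTop (by norm_num : (0 : ℝ) < 1 / 2)).eventually_ge_atTop C,
    eventually_ge_atTop 0] with t hC ht
  calc C * t ^ (3 / 2 : ℝ) ≤ t ^ (1 / 2 : ℝ) * t ^ (3 / 2 : ℝ) := by gcongr
    _ = t ^ 2 := by rw [← Real.rpow_add' ht (by norm_num)]; norm_num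

theorem statement8_general (m e : ℕ → ℕ) (hm : StrictMonoOn m (Set.Ici 1))
    (a : ℕ → ℕ) (ha : IsBlockSeq m e a)
    (hcondi : ∀ l, 2 ≤ l → (Eidx m e (l - 1) : ℝ) ≤ (Real.log (m l)) ^ 2)
    (α : ℝ) (c₁ : ℝ)
    (hα : ∀ N : ℕ, 2 ≤ N →
      (N : ℝ) * disc N (fun n => Int.fract ((n : ℝ) * α)) ≤ c₁ * (Real.log N) ^ (3 / 2 : ℝ)) :
    ∀ᶠ l : ℕ in atTop,
      (Fidx m e l : ℝ) * disc (Fidx m e l) (fun n => Int.fract ((a n : ℝ) * α)) ≤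
        2 * (Real.log (Fidx m e l)) ^ 2 := by
  have hlog : Tendsto (fun l => Real.log (Fidx m e l)) atTop atTop :=
    Real.tendsto_log_atTop.comp (tendsto_natCast_atTop_atTop.comp (tendsto_Fidx_atTop e hm))
  filter_upwards [eventually_ge_atTop 4,
    hlog.eventually (eventually_mul_rpow_three_halves_le_sq (2 * |c₁| * 3 ^ (3 / 2 : ℝ)))]
    with l hl hsmall
  obtain ⟨k, rfl⟩ : ∃ k, l = k + 2 := ⟨l - 2, by omega⟩
  set t := Real.log (Fidx m e (k + 2))
  have hmk : k + 1 ≤ m (k + 2) :=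
    (Nat.le_add_left _ _).trans (add_le_apply_add_one_of_strictMonoOn hm (k + 1))
  have hF : m (k + 2) ≤ Fidx m e (k + 2) := apply_le_Fidx m e (by omega)
  have hB : 2 ≤ Bval m e (k + 1) := (by omega : 2 ≤ k).trans (le_Bval_succ e hm k)
  have hBA : Bval m e (k + 1) ≤ Aval m e (k + 2) := Aval_succ m e (k + 1) ▸ Nat.le_add_right _ _
  have hAF : Aval m e (k + 2) ≤ Fidx m e (k + 2) ^ 3 := Aval_le_Fidx_pow_three m e (by omega)
  have hE : (Eidx m e (k + 1) : ℝ) ≤ t ^ 2 := by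
    have hm0 : (1 : ℝ) ≤ m (k + 2) := by exact_mod_cast (by omega : 1 ≤ m (k + 2))
    exact (hcondi (k + 2) (by omega)).trans (pow_le_pow_left₀ (Real.log_nonneg hm0)
      (Real.log_le_log (by positivity) (by exact_mod_cast hF)) 2)
  have ht : 0 ≤ t := Real.log_nonneg (by exact_mod_cast (by omega : 1 ≤ Fidx m e (k + 2)))
  calc _ ≤ Eidx m e (k + 1) + 2 * (|c₁| * (3 * t) ^ (3 / 2 : ℝ)) :=
        ha.mul_disc_Fidx_succ_le _ (show 0 < m (k + 2) by omega) (by omega)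
          (mul_disc_le_of_le_pow_three hα hB (hBA.trans hAF))
          (mul_disc_le_of_le_pow_three hα (hB.trans hBA) hAF)
    _ ≤ 2 * t ^ 2 := by rw [Real.mul_rpow (by norm_num) ht]; linarith

theorem statement8 (γ : ℝ) (hγ0 : 0 < γ) (hγ : γ ≤ 1 / 2)
    (m e : ℕ → ℕ) (hm : StrictMonoOn m (Set.Ici 1)) (he : StrictMonoOn e (Set.Ici 1))
    (hm1 : ∀ j, 1 ≤ j → 0 < m j) (he1 : ∀ j, 1 ≤ j → 0 < e j)
    (a : ℕ → ℕ) (ha : IsBlockSeq m e a)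
    (hcondi : ∀ l, 2 ≤ l → (Eidx m e (l - 1) : ℝ) ≤ (Real.log (m l)) ^ 2)
    (α : ℝ) (c₁ : ℝ)
    (hα : ∀ N : ℕ, 2 ≤ N →
      (N : ℝ) * disc N (fun n => Int.fract ((n : ℝ) * α)) ≤ c₁ * (Real.log N) ^ (3 / 2 : ℝ)) :
    ∀ᶠ l : ℕ in atTop,
      (Fidx m e l : ℝ) * disc (Fidx m e l) (fun n => Int.fract ((a n : ℝ) * α)) ≤
        2 * (Real.log (Fidx m e l)) ^ 2 :=
  statement8_general m e hm a ha hcondi α c₁ hα
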